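/- arXiv:2409.09855 — 6 statements merged into one kernel-verified Lean document; each statement's English description precedes it below -/
import Mathlib

section
/- For every pair of alternating bilinear forms A, B on a finite-dimensional complex vector space V there exists a bi-Lagrangian subspace: that is, there is a subspace L ⊆ V on which both A and B vanish identically and such that 2·(dim V − dim L) equals the rank r of the pencil {A + λ·B}. -/
/-!
Induction on `dim V`, with the pencil encoded by the span `P` of `A` and `B`, so that `B` is a
member like any other. Over an algebraically closed field some `v ≠ 0` is killed by a member of
`P`, so the functionals `C v`, `C ∈ P`, lie on one line. If they all vanish, a bi-Lagrangian
subspace of a complement of `span {v}`, enlarged by `v`, is one for `V`. Otherwise the nonzero ones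
share a kernel `W`, a hyperplane containing `v`. The kernel of a member of maximal rank `r` is
isotropic for the whole pencil (a determinant argument), hence lies in `W`; as ranks are even,
every member loses at least two units of rank on `W`, and a maximal one exactly two. So the pencil
restricted to `W` has rank `r - 2`, and a bi-Lagrangian subspace for it is one for `V`.
-/

open Module
open LinearMap (BilinForm ker range)

namespace Matrix

variable {ι K : Type*} [Fintype ι] [DecidableEq ι] [Field K]

theorem even_card_of_transpose_eq_neg [NeZero (2 : K)] {M : Matrix ι ι K} (hM : Mᵀ = -M)
    (hdet : M.det ≠ 0) : Even (Fintype.card ι) := by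
  by_contra hodd
  have h := M.det_transpose
  rw [hM, det_neg, (Nat.not_even_iff_odd.mp hodd).neg_one_pow, neg_one_mul,
    neg_eq_iff_add_eq_zero, ← two_mul] at h
  exact hdet ((mul_eq_zero.mp h).resolve_left two_ne_zero)

open Polynomial in
theorem finite_setOf_det_add_smul_eq_zero (N : Matrix ι ι K) {M : Matrix ι ι K}
    (hM : M.det ≠ 0) : {t : K | (M + t • N).det = 0}.Finite := by
  set p : K[X] := ((X : K[X]) • N.map C + M.map C).det
  have hp : p ≠ 0 := fun h => hM <| by
    rw [← coeff_det_X_add_C_zero N M]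
    change p.coeff 0 = 0
    rw [h, coeff_zero]
  refine (finite_setOfPred_isRoot hp).subset fun t ht => ?_
  have := (evalRingHom t).map_det ((X : K[X]) • N.map C + M.map C)
  simp only [Set.mem_ofPred_eq] at ht ⊢
  rw [IsRoot, ← coe_evalRingHom, this]
  convert ht using 2
  ext i j
  simp only [RingHom.mapMatrix_apply, map_apply, add_apply, smul_apply, smul_eq_mul,
    coe_evalRingHom, eval_add, eval_mul, eval_X, eval_C]
  ring

end Matrix

theorem Submodule.finrank_map_subtype_sup {K V : Type*} [Field K] [AddCommGroup V] [Module K V]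
    [FiniteDimensional K V] {W U : Submodule K V} (h : Disjoint W U) (L : Submodule K W) :
    finrank K ↥(L.map W.subtype ⊔ U) = finrank K L + finrank K U := by
  have := finrank_sup_add_finrank_inf_eq (L.map W.subtype) U
  rw [(h.mono_left (map_subtype_le W L)).eq_bot, finrank_bot, finrank_map_subtype_eq] at this
  omega

namespace LinearMap.BilinForm

variable {K V : Type*} [Field K] [AddCommGroup V] [Module K V]

def gram (C : BilinForm K V) {ι : Type*} (e : ι → V) : Matrix ι ι K :=
  Matrix.of fun i j => C (e i) (e j)

@[simp] theorem gram_apply (C : BilinForm K V) {ι : Type*} (e : ι → V) (i j : ι) :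
    C.gram e i j = C (e i) (e j) := rfl

theorem apply_eq_of_sub_mem_ker {C : BilinForm K V} (hC : C.IsRefl) {x x' y y' : V}
    (hx : x - x' ∈ ker C) (hy : y - y' ∈ ker C) : C x y = C x' y' := by
  have h1 : C (x - x') y = 0 := by rw [LinearMap.mem_ker.mp hx]; rfl
  have h2 : C x' (y - y') = 0 := hC _ _ (by rw [LinearMap.mem_ker.mp hy]; rfl)
  rw [map_sub, LinearMap.sub_apply, sub_eq_zero] at h1
  rw [map_sub, sub_eq_zero] at h2
  rw [h1, h2]

theorem restrict_sup_eq_zero {C : BilinForm K V} (hC : C.IsRefl) {L U : Submodule K V}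
    (hL : C.restrict L = 0) (hU : U ≤ ker C) : C.restrict (L ⊔ U) = 0 := by
  ext ⟨x, hx⟩ ⟨y, hy⟩
  obtain ⟨a, ha, k, hk, rfl⟩ := Submodule.mem_sup.mp hx
  obtain ⟨b, hb, l, hl, rfl⟩ := Submodule.mem_sup.mp hy
  change C (a + k) (b + l) = 0
  rw [apply_eq_of_sub_mem_ker hC (x' := a) (y' := b) (by simpa using hU hk)
    (by simpa using hU hl)]
  exact LinearMap.congr_fun₂ hL ⟨a, ha⟩ ⟨b, hb⟩

theorem restrict_map_subtype_eq_zero {C : BilinForm K V} {W : Submodule K V}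
    {L : Submodule K W} (hL : (C.restrict W).restrict L = 0) :
    C.restrict (L.map W.subtype) = 0 := by
  ext ⟨_, ⟨x, hx, rfl⟩⟩ ⟨_, ⟨y, hy, rfl⟩⟩
  exact LinearMap.congr_fun₂ hL ⟨x, hx⟩ ⟨y, hy⟩

def restrictₗ (W : Submodule K V) : BilinForm K V →ₗ[K] BilinForm K W where
  toFun C := C.restrict W
  map_add' _ _ := rfl
  map_smul' _ _ := rfl

structure IsAltPencil (P : Submodule K (BilinForm K V)) (r : ℕ) : Prop where
  exists_eq_span_pair : ∃ A B, P = Submodule.span K {A, B}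
  isAlt : ∀ C ∈ P, C.IsAlt
  finrank_range_le : ∀ C ∈ P, finrank K (range C) ≤ r
  exists_finrank_range_eq : ∃ C ∈ P, finrank K (range C) = r

namespace IsAltPencil

variable {P : Submodule K (BilinForm K V)} {r : ℕ}

theorem map_restrictₗ (hP : IsAltPencil P r) (W : Submodule K V) {r' : ℕ}
    (hle : ∀ C ∈ P, finrank K (range (C.restrict W)) ≤ r')
    (hex : ∃ C ∈ P, finrank K (range (C.restrict W)) = r') :
    IsAltPencil (P.map (restrictₗ W)) r' where
  exists_eq_span_pair := by
    obtain ⟨A, B, rfl⟩ := hP.exists_eq_span_pair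
    exact ⟨A.restrict W, B.restrict W, by rw [Submodule.map_span, Set.image_pair]; rfl⟩
  isAlt := by
    rintro _ ⟨C, hC, rfl⟩ x
    exact hP.isAlt C hC x
  finrank_range_le := by
    rintro _ ⟨C, hC, rfl⟩
    exact hle C hC
  exists_finrank_range_eq := by
    obtain ⟨C, hC, h⟩ := hex
    exact ⟨_, ⟨C, hC, rfl⟩, h⟩

end IsAltPencil

variable [FiniteDimensional K V]

theorem card_le_finrank_range_of_det_gram_ne_zero {ι : Type*} [Fintype ι] [DecidableEq ι]
    {C : BilinForm K V} {e : ι → V} (h : (C.gram e).det ≠ 0) :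
    Fintype.card ι ≤ finrank K (range C) := by
  let φ : ι → range C := fun i => ⟨C (e i), LinearMap.mem_range_self C (e i)⟩
  suffices LinearIndependent K φ from this.fintype_card_le_finrank
  refine LinearIndependent.of_comp (range C).subtype (Fintype.linearIndependent_iff.mpr ?_)
  intro g hg
  refine congrFun (Matrix.eq_zero_of_vecMul_eq_zero h (funext fun j => ?_))
  simpa [Matrix.vecMul, dotProduct, φ] using LinearMap.congr_fun hg (e j)

theorem exists_det_gram_ne_zero {C : BilinForm K V} (hC : C.IsRefl) :
    ∃ e : Fin (finrank K (range C)) → V, (C.gram e).det ≠ 0 := by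
  obtain ⟨U, hU⟩ := (ker C).exists_isCompl
  have hdim : finrank K U = finrank K (range C) := by
    have := Submodule.finrank_add_eq_of_isCompl hU
    have := LinearMap.finrank_range_add_finrank_ker C
    omega
  let b := Module.finBasisOfFinrankEq K U hdim
  have hdisj : Disjoint U (C.orthogonal U) := by
    refine Submodule.disjoint_def.mpr fun u hu hperp => ?_
    suffices u ∈ ker C from Submodule.disjoint_def.mp hU.disjoint u this hu
    refine LinearMap.ext fun x => ?_
    obtain ⟨k, hk, w, hw, rfl⟩ :=
      Submodule.mem_sup.mp (hU.codisjoint.eq_top ▸ Submodule.mem_top (x := x))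
    have hk' : C u k = 0 := hC k u (by simp [LinearMap.mem_ker.mp hk])
    have hw' : C u w = 0 := hC w u (hperp w hw)
    simp [hk', hw']
  refine ⟨fun i => b i, ?_⟩
  have := (nondegenerate_iff_det_ne_zero b).mp
    (C.nondegenerate_restrict_of_disjoint_orthogonal hC hdisj)
  convert this using 2
  ext i j
  simp [toMatrix_apply]

theorem even_finrank_range [NeZero (2 : K)] {C : BilinForm K V} (hC : C.IsAlt) :
    Even (finrank K (range C)) := by
  obtain ⟨e, he⟩ := exists_det_gram_ne_zero hC.isRefl
  simpa using Matrix.even_card_of_transpose_eq_neg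
    (by ext i j; exact (LinearMap.IsAlt.neg hC (e i) (e j)).symm) he

theorem finrank_range_restrict_le (C : BilinForm K V) (W : Submodule K V) :
    finrank K (range (C.restrict W)) ≤ finrank K (range C) := by
  rw [show C.restrict W = W.subtype.dualMap ∘ₗ C ∘ₗ W.subtype from rfl, LinearMap.range_comp]
  exact (Submodule.finrank_map_le _ _).trans
    (Submodule.finrank_mono (LinearMap.range_comp_le_range _ _))

theorem finrank_range_restrict_of_isCompl {C : BilinForm K V} (hC : C.IsRefl)
    {W U : Submodule K V} (hWU : IsCompl W U) (hU : U ≤ ker C) :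
    finrank K (range (C.restrict W)) = finrank K (range C) := by
  refine le_antisymm (C.finrank_range_restrict_le W) ?_
  obtain ⟨e, he⟩ := exists_det_gram_ne_zero hC
  have hproj : ∀ x : V, ∃ w : W, x - w ∈ ker C := fun x => by
    obtain ⟨w, u, hw, hu, rfl⟩ := Submodule.codisjoint_iff_exists_add_eq.mp hWU.codisjoint x
    exact ⟨⟨w, hw⟩, by simpa using hU hu⟩
  choose p hp using hproj
  have hgram : (C.restrict W).gram (p ∘ e) = C.gram e := by
    ext i j
    exact (apply_eq_of_sub_mem_ker hC (hp (e i)) (hp (e j))).symm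
  have := card_le_finrank_range_of_det_gram_ne_zero (hgram ▸ he)
  rwa [Fintype.card_fin] at this

theorem finrank_range_le_finrank_range_restrict_add (C : BilinForm K V) (W : Submodule K V) :
    finrank K (range C) ≤
      finrank K (range (C.restrict W)) + 2 * (finrank K V - finrank K W) := by
  set Z := (ker (C.restrict W)).map W.subtype
  have hZ : Z.map C ≤ W.dualAnnihilator := by
    rintro _ ⟨_, ⟨z, hz, rfl⟩, rfl⟩
    rw [Submodule.mem_dualAnnihilator]
    intro w hw
    exact LinearMap.congr_fun (LinearMap.mem_ker.mp hz) ⟨w, hw⟩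
  have hZker : finrank K ((ker C).comap Z.subtype) ≤ finrank K (ker C) := by
    rw [← Submodule.finrank_map_subtype_eq, Submodule.map_comap_subtype]
    exact Submodule.finrank_mono inf_le_right
  have h1 := LinearMap.finrank_range_add_finrank_ker (C.domRestrict Z)
  rw [LinearMap.range_domRestrict, LinearMap.ker_domRestrict] at h1
  have h2 : finrank K (Z.map C) ≤ finrank K W.dualAnnihilator := Submodule.finrank_mono hZ
  have h3 : finrank K W + finrank K W.dualAnnihilator = finrank K V :=
    Subspace.finrank_add_finrank_dualAnnihilator_eq W
  have h4 : finrank K Z = finrank K (ker (C.restrict W)) := Submodule.finrank_map_subtype_eq _ _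
  have := LinearMap.finrank_range_add_finrank_ker C
  have := LinearMap.finrank_range_add_finrank_ker (C.restrict W)
  have := Submodule.finrank_le W
  omega

theorem finrank_range_restrict_add_two_le [NeZero (2 : K)] {C : BilinForm K V} (hC : C.IsAlt)
    {f : Dual K V} (hf : f ≠ 0) (hker : ker C ≤ ker f) :
    finrank K (range (C.restrict (ker f))) + 2 ≤ finrank K (range C) := by
  set W := ker f
  have hsub : (ker C).comap W.subtype ≤ ker (C.restrict W) := fun x hx => by
    have hx : C x = 0 := hx
    ext y
    simp [hx]
  have := Submodule.finrank_mono hsub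
  rw [(Submodule.comapSubtypeEquivOfLe hker).finrank_eq] at this
  have := LinearMap.finrank_range_add_finrank_ker C
  have := LinearMap.finrank_range_add_finrank_ker (C.restrict W)
  have : finrank K W + 1 = finrank K V := Module.Dual.finrank_ker_add_one_of_ne_zero hf
  obtain ⟨a, ha⟩ := even_finrank_range hC
  obtain ⟨b, hb⟩ := even_finrank_range (C := C.restrict W) fun x => hC x
  omega

theorem apply_eq_zero_of_mem_ker [Infinite K] {C D : BilinForm K V} (hC : C.IsRefl)
    (hD : D.IsAlt) (hmax : ∀ t : K, finrank K (range (C + t • D)) ≤ finrank K (range C))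
    {x y : V} (hx : C x = 0) (hy : C y = 0) : D x y = 0 := by
  by_contra hxy
  obtain ⟨e, he⟩ := exists_det_gram_ne_zero hC
  have hCxy : ∀ k, C (![x, y] k) = 0 := fun k => by fin_cases k <;> simpa
  have hCexy : ∀ i k, C (e i) (![x, y] k) = 0 := fun i k => hC _ _ (by rw [hCxy]; rfl)
  -- On `e, x, y` the rows of `x, y` in the Gram matrix of `C + t • D` are divisible by `t`;
  -- dividing them out leaves `N₀ + t • N₁`, with `N₀` block triangular of determinant
  -- `det (C.gram e) * (D x y) ^ 2`.
  let N₀ := Matrix.fromBlocks (C.gram e) 0 (.of fun k j => D (![x, y] k) (e j)) (D.gram ![x, y])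
  let N₁ := Matrix.fromBlocks (D.gram e) (.of fun i k => D (e i) (![x, y] k))
    (0 : Matrix (Fin 2) _ K) 0
  have hscale : ∀ t : K, (C + t • D).gram (Sum.elim e ![x, y]) =
      .diagonal (Sum.elim 1 fun _ => t) * (N₀ + t • N₁) := fun t => by
    ext (i | k) (j | l) <;> simp [N₀, N₁, hCxy, hCexy]
  have hN₀ : N₀.det ≠ 0 := by
    rw [Matrix.det_fromBlocks_zero₁₂, Matrix.det_fin_two]
    refine mul_ne_zero he ?_
    simpa [hD x, hD y, ← LinearMap.IsAlt.neg hD x y] using hxy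
  obtain ⟨t, ht⟩ :=
    ((Matrix.finite_setOf_det_add_smul_eq_zero N₁ hN₀).union (Set.finite_singleton 0)).exists_notMem
  simp only [Set.mem_union, Set.mem_ofPred_eq, Set.mem_singleton_iff, not_or] at ht
  have hdet : ((C + t • D).gram (Sum.elim e ![x, y])).det ≠ 0 := by
    rw [hscale, Matrix.det_mul, Matrix.det_diagonal, Fintype.prod_sum_type]
    simp [ht.1, ht.2]
  have := card_le_finrank_range_of_det_gram_ne_zero hdet
  simp only [Fintype.card_sum, Fintype.card_fin] at this
  have := hmax t
  omega

theorem exists_ne_zero_forall_mem_span_apply_eq_smul [IsAlgClosed K] [Nontrivial V]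
    (A B : BilinForm K V) :
    ∃ v ≠ 0, ∃ D ∈ Submodule.span K {A, B},
      ∀ C ∈ Submodule.span K {A, B}, ∃ c : K, C v = c • D v := by
  by_cases hB : ker B = ⊥
  · let e := LinearMap.linearEquivOfInjective B (LinearMap.ker_eq_bot.mp hB)
      Subspace.dual_finrank_eq.symm
    obtain ⟨μ, hμ⟩ := Module.End.exists_eigenvalue (e.symm.toLinearMap ∘ₗ A)
    obtain ⟨v, hv⟩ := hμ.exists_hasEigenvector
    have hAv : A v = μ • B v := by simpa [e] using congrArg e hv.apply_eq_smul
    refine ⟨v, hv.2, B, Submodule.subset_span (by simp), fun C hC => ?_⟩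
    obtain ⟨s, t, rfl⟩ := Submodule.mem_span_pair.mp hC
    exact ⟨s * μ + t, by simp [hAv, add_smul, mul_smul]⟩
  · obtain ⟨v, hv, hv0⟩ := (Submodule.ne_bot_iff _).mp hB
    refine ⟨v, hv0, A, Submodule.subset_span (by simp), fun C hC => ?_⟩
    obtain ⟨s, t, rfl⟩ := Submodule.mem_span_pair.mp hC
    exact ⟨s, by simp [LinearMap.mem_ker.mp hv]⟩

namespace IsAltPencil

variable {P : Submodule K (BilinForm K V)} {r : ℕ}

theorem even [NeZero (2 : K)] (hP : IsAltPencil P r) : Even r := by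
  obtain ⟨C, hC, rfl⟩ := hP.exists_finrank_range_eq
  exact even_finrank_range (hP.isAlt C hC)

theorem map_restrictₗ_of_isCompl (hP : IsAltPencil P r) {W U : Submodule K V}
    (hWU : IsCompl W U) (hU : ∀ C ∈ P, U ≤ ker C) : IsAltPencil (P.map (restrictₗ W)) r := by
  have h : ∀ C ∈ P, finrank K (range (C.restrict W)) = finrank K (range C) := fun C hC =>
    finrank_range_restrict_of_isCompl (hP.isAlt C hC).isRefl hWU (hU C hC)
  refine hP.map_restrictₗ W (fun C hC => (h C hC).trans_le (hP.finrank_range_le C hC)) ?_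
  obtain ⟨C, hC, hCr⟩ := hP.exists_finrank_range_eq
  exact ⟨C, hC, (h C hC).trans hCr⟩

theorem map_restrictₗ_ker [Infinite K] [NeZero (2 : K)] (hP : IsAltPencil P r) {v : V}
    {D : BilinForm K V} (hD : D ∈ P) (hDv : D v ≠ 0) (hline : ∀ C ∈ P, ∃ c : K, C v = c • D v) :
    ∃ r', r = r' + 2 ∧ IsAltPencil (P.map (restrictₗ (ker (D v)))) r' := by
  have hbound : ∀ C ∈ P, finrank K (range (C.restrict (ker (D v)))) + 2 ≤ r := by
    intro C hC
    have hdrop := finrank_range_restrict_add_two_le (hP.isAlt C hC) hDv (C := C)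
    by_cases hCv : C v = 0
    · by_cases hCr : finrank K (range C) = r
      · have hmax : ∀ t : K, finrank K (range (C + t • D)) ≤ finrank K (range C) := fun t =>
          hCr ▸ hP.finrank_range_le _ (P.add_mem hC (P.smul_mem t hD))
        refine (hdrop fun x hx => ?_).trans hCr.le
        exact apply_eq_zero_of_mem_ker (hP.isAlt C hC).isRefl (hP.isAlt D hD) hmax hCv
          (LinearMap.mem_ker.mp hx)
      · obtain ⟨a, ha⟩ := even_finrank_range (hP.isAlt C hC)
        obtain ⟨b, hb⟩ := hP.even
        have := hP.finrank_range_le C hC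
        have := C.finrank_range_restrict_le (ker (D v))
        omega
    · obtain ⟨c, hc⟩ := hline C hC
      have hc0 : c ≠ 0 := by rintro rfl; simp_all
      refine (hdrop fun x hx => ?_).trans (hP.finrank_range_le C hC)
      have : C v x = 0 := (hP.isAlt C hC).isRefl _ _ (by rw [LinearMap.mem_ker.mp hx]; rfl)
      simpa [hc, hc0] using this
  obtain ⟨C, hC, hCr⟩ := hP.exists_finrank_range_eq
  have := Module.Dual.finrank_ker_add_one_of_ne_zero hDv
  have := C.finrank_range_le_finrank_range_restrict_add (ker (D v))
  have := hbound C hC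
  exact ⟨finrank K (range (C.restrict (ker (D v)))), by omega,
    hP.map_restrictₗ _ (fun C' hC' => by have := hbound C' hC'; omega) ⟨C, hC, rfl⟩⟩

theorem exists_restrict_eq_zero [IsAlgClosed K] [NeZero (2 : K)] (hP : IsAltPencil P r) :
    ∃ L : Submodule K V, (∀ C ∈ P, C.restrict L = 0) ∧ 2 * (finrank K V - finrank K L) = r := by
  induction hn : finrank K V using Nat.strong_induction_on generalizing V r with
  | _ n ih =>
  rcases subsingleton_or_nontrivial V with hV | hV
  · obtain ⟨C, -, rfl⟩ := hP.exists_finrank_range_eq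
    have h0 : finrank K (range C) = 0 :=
      Nat.eq_zero_of_le_zero ((LinearMap.finrank_range_le C).trans_eq finrank_zero_of_subsingleton)
    exact ⟨⊤, fun C _ => Subsingleton.elim _ _, by rw [finrank_top, ← hn, Nat.sub_self, h0]⟩
  obtain ⟨A, B, rfl⟩ := hP.exists_eq_span_pair
  obtain ⟨v, hv, D, hD, hline⟩ := exists_ne_zero_forall_mem_span_apply_eq_smul A B
  by_cases hDv : D v = 0
  · have hker : ∀ C ∈ Submodule.span K {A, B}, Submodule.span K {v} ≤ ker C := fun C hC => by
      obtain ⟨c, hc⟩ := hline C hC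
      rw [Submodule.span_singleton_le_iff_mem, LinearMap.mem_ker, hc, hDv, smul_zero]
    obtain ⟨W, hW⟩ := (Submodule.span K {v}).exists_isCompl
    have hdim := Submodule.finrank_add_eq_of_isCompl hW
    rw [finrank_span_singleton hv] at hdim
    obtain ⟨L, hL, hLdim⟩ := ih _ (by omega) (hP.map_restrictₗ_of_isCompl hW.symm hker) rfl
    refine ⟨L.map W.subtype ⊔ Submodule.span K {v}, fun C hC => restrict_sup_eq_zero
      (hP.isAlt C hC).isRefl (restrict_map_subtype_eq_zero (hL _ ⟨C, hC, rfl⟩)) (hker C hC), ?_⟩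
    rw [Submodule.finrank_map_subtype_sup hW.symm.disjoint, finrank_span_singleton hv]
    have := Submodule.finrank_le L
    omega
  · obtain ⟨r', rfl, hP'⟩ := hP.map_restrictₗ_ker hD hDv hline
    have hdim := Module.Dual.finrank_ker_add_one_of_ne_zero hDv
    obtain ⟨L, hL, hLdim⟩ := ih _ (by omega) hP' rfl
    refine ⟨L.map (ker (D v)).subtype,
      fun C hC => restrict_map_subtype_eq_zero (hL _ ⟨C, hC, rfl⟩), ?_⟩
    rw [Submodule.finrank_map_subtype_eq]
    have := Submodule.finrank_le L
    omega

end IsAltPencil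

end LinearMap.BilinForm

/-- **Existence of bi-Lagrangian subspaces.**
For every pair of alternating bilinear forms `A`, `B` on a finite-dimensional complex
vector space `V` there exists a bi-Lagrangian subspace: a subspace `L` on which both
`A` and `B` vanish identically and such that `2 * (dim V - dim L)` equals the rank `r`
of the pencil `{A + λ • B}`. -/
theorem biLagrangian_exists
    {V : Type*} [AddCommGroup V] [Module ℂ V] [FiniteDimensional ℂ V]
    (A B : V →ₗ[ℂ] V →ₗ[ℂ] ℂ)
    (hA : ∀ v, A v v = 0) (hB : ∀ v, B v v = 0)
    (r : ℕ)
    (hrB : finrank ℂ (LinearMap.range B) ≤ r)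
    (hrA : ∀ l : ℂ, finrank ℂ (LinearMap.range (A + l • B)) ≤ r)
    (hrmax : r = finrank ℂ (LinearMap.range B) ∨
      ∃ l : ℂ, r = finrank ℂ (LinearMap.range (A + l • B))) :
    ∃ L : Submodule ℂ V,
      (∀ u ∈ L, ∀ v ∈ L, A u v = 0) ∧
      (∀ u ∈ L, ∀ v ∈ L, B u v = 0) ∧
      2 * (finrank ℂ V - finrank ℂ L) = r := by
  have hP : BilinForm.IsAltPencil (Submodule.span ℂ {A, B}) r := by
    refine ⟨⟨A, B, rfl⟩, fun C hC => ?_, fun C hC => ?_, ?_⟩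
    · obtain ⟨s, t, rfl⟩ := Submodule.mem_span_pair.mp hC
      intro v
      simp [hA v, hB v]
    · obtain ⟨s, t, rfl⟩ := Submodule.mem_span_pair.mp hC
      rcases eq_or_ne s 0 with rfl | hs
      · rw [zero_smul, zero_add]
        exact (Submodule.finrank_mono (LinearMap.range_smul_le_range B t)).trans hrB
      · rw [show s • A + t • B = s • (A + (t / s) • B) by
          rw [smul_add, smul_smul, mul_div_cancel₀ t hs], LinearMap.range_smul _ _ hs]
        exact hrA _
    · rcases hrmax with h | ⟨l, h⟩
      · exact ⟨B, Submodule.subset_span (by simp), h.symm⟩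
      · exact ⟨A + l • B, Submodule.mem_span_pair.mpr ⟨1, l, by simp⟩, h.symm⟩
  obtain ⟨L, hL, hdim⟩ := hP.exists_restrict_eq_zero
  have hiso : ∀ C ∈ Submodule.span ℂ {A, B}, ∀ u ∈ L, ∀ v ∈ L, C u v = 0 :=
    fun C hC u hu v hv => LinearMap.congr_fun₂ (hL C hC) ⟨u, hu⟩ ⟨v, hv⟩
  exact ⟨L, hiso A (Submodule.subset_span (by simp)), hiso B (Submodule.subset_span (by simp)),
    hdim⟩
end

section
/- Let L be a bi-Lagrangian subspace for the pencil generated by alternating forms A and B on V. Then: (i) L contains the kernel of every regular member of the pencil, so L contains the core K, defined as the sum of the subspaces ker(A + λ·B) over all λ ∈ ℂ with rank(A + λ·B) = r, together with ker B in case rank B = r; and (ii) for every regular member A_μ of the pencil, L is contained in the A_μ-orthogonal complement of K, i.e. A_μ(v, u) = 0 for all v ∈ L and u ∈ K. -/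
/-!
A subspace `W` isotropic for a bilinear form `C` has `rank C + 2 dim W ≤ 2 dim V`, because `C`
maps `W` into the annihilator of `W` with kernel `W ⊓ ker C`. If `C` is reflexive, `W ⊔ ker C` is
isotropic along with `W`, so an isotropic `W` of that maximal dimension contains `ker C`. A
bi-Lagrangian `L` is isotropic for every member of the pencil and has the maximal dimension for
each regular one, so it contains every regular kernel, hence the core; isotropy of `L` for `A_μ`
then gives `L ⟂ K`.
-/

open Module

/-- The core subspace of the pencil `{A + λ • B}` of rank `r`: the sum of the kernels
of all regular members of the pencil (including `B`, the member at `λ = ∞`, in case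
`B` is regular). -/
noncomputable def core {V : Type*} [AddCommGroup V] [Module ℂ V] [FiniteDimensional ℂ V]
    (A B : V →ₗ[ℂ] V →ₗ[ℂ] ℂ) (r : ℕ) : Submodule ℂ V :=
  (⨆ l : {l : ℂ // finrank ℂ (LinearMap.range (A + l • B)) = r},
      LinearMap.ker (A + (l : ℂ) • B)) ⊔
  ⨆ _ : finrank ℂ (LinearMap.range B) = r, LinearMap.ker B

namespace LinearMap.BilinForm

variable {K V : Type*} [Field K] [AddCommGroup V] [Module K V] {B : LinearMap.BilinForm K V}
  {W : Submodule K V}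

theorem le_orthogonal_add_smul {A : LinearMap.BilinForm K V} (c : K)
    (hA : W ≤ A.orthogonal W) (hB : W ≤ B.orthogonal W) : W ≤ (A + c • B).orthogonal W :=
  fun v hv u hu => by
    simp only [LinearMap.add_apply, LinearMap.smul_apply, hA hv u hu, hB hv u hu, smul_zero,
      add_zero]

theorem finrank_range_add_two_mul_finrank_le_of_le_orthogonal [FiniteDimensional K V]
    (hW : W ≤ B.orthogonal W) :
    finrank K (LinearMap.range B) + 2 * finrank K W ≤ 2 * finrank K V := by
  have hdual := finrank_add_finrank_orthogonal' (B := B) W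
  have hrank := LinearMap.finrank_range_add_finrank_ker B
  have hWorth := Submodule.finrank_mono hW
  have hinf := Submodule.finrank_mono (inf_le_right : W ⊓ LinearMap.ker B ≤ _)
  omega

theorem sup_ker_le_orthogonal_sup_ker (hB : B.IsRefl) (hW : W ≤ B.orthogonal W) :
    W ⊔ LinearMap.ker B ≤ B.orthogonal (W ⊔ LinearMap.ker B) := by
  rintro _ hx _ hy
  obtain ⟨w, hw, k, hk, rfl⟩ := Submodule.mem_sup.mp hx
  obtain ⟨w', hw', k', hk', rfl⟩ := Submodule.mem_sup.mp hy
  rw [LinearMap.mem_ker] at hk hk'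
  have hkw' : B w' k = 0 := hB.eq_zero (by rw [hk, LinearMap.zero_apply])
  simp only [map_add, hk', hkw', hW hw w' hw', add_zero]

theorem ker_le_of_le_orthogonal [FiniteDimensional K V] (hB : B.IsRefl)
    (hW : W ≤ B.orthogonal W)
    (hdim : finrank K (LinearMap.range B) + 2 * finrank K W = 2 * finrank K V) :
    LinearMap.ker B ≤ W := by
  have hmax := finrank_range_add_two_mul_finrank_le_of_le_orthogonal
    (sup_ker_le_orthogonal_sup_ker hB hW)
  have hsup : W = W ⊔ LinearMap.ker B :=
    Submodule.eq_of_le_of_finrank_le le_sup_left (by omega)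
  exact hsup ▸ le_sup_right

end LinearMap.BilinForm

theorem biLagrangian_between_core_and_mantle_general
    {V : Type*} [AddCommGroup V] [Module ℂ V] [FiniteDimensional ℂ V]
    (A B : V →ₗ[ℂ] V →ₗ[ℂ] ℂ)
    (hA : ∀ v, A v v = 0) (hB : ∀ v, B v v = 0)
    (r : ℕ)
    (L : Submodule ℂ V)
    (hLA : ∀ u ∈ L, ∀ v ∈ L, A u v = 0)
    (hLB : ∀ u ∈ L, ∀ v ∈ L, B u v = 0)
    (hLdim : 2 * (finrank ℂ V - finrank ℂ L) = r) :
    (∀ l : ℂ, finrank ℂ (LinearMap.range (A + l • B)) = r →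
        LinearMap.ker (A + l • B) ≤ L) ∧
    (finrank ℂ (LinearMap.range B) = r → LinearMap.ker B ≤ L) ∧
    core A B r ≤ L ∧
    (∀ μ : ℂ, finrank ℂ (LinearMap.range (A + μ • B)) = r →
      ∀ v ∈ L, ∀ u ∈ core A B r, (A + μ • B) v u = 0) ∧
    (finrank ℂ (LinearMap.range B) = r →
      ∀ v ∈ L, ∀ u ∈ core A B r, B v u = 0) := by
  have hLA' : L ≤ LinearMap.BilinForm.orthogonal A L := fun v hv u hu => hLA u hu v hv
  have hLB' : L ≤ LinearMap.BilinForm.orthogonal B L := fun v hv u hu => hLB u hu v hv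
  have hLagrangian : ∀ C : V →ₗ[ℂ] V →ₗ[ℂ] ℂ, finrank ℂ (LinearMap.range C) = r →
      finrank ℂ (LinearMap.range C) + 2 * finrank ℂ L = 2 * finrank ℂ V := by
    have := L.finrank_le
    omega
  have hkerA : ∀ l : ℂ, finrank ℂ (LinearMap.range (A + l • B)) = r →
      LinearMap.ker (A + l • B) ≤ L := fun l hl =>
    LinearMap.BilinForm.ker_le_of_le_orthogonal
      (LinearMap.IsAlt.isRefl fun v => by simp [hA, hB])
      (LinearMap.BilinForm.le_orthogonal_add_smul l hLA' hLB') (hLagrangian _ hl)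
  have hkerB : finrank ℂ (LinearMap.range B) = r → LinearMap.ker B ≤ L := fun h =>
    LinearMap.BilinForm.ker_le_of_le_orthogonal (LinearMap.IsAlt.isRefl hB) hLB'
      (hLagrangian B h)
  have hcore : core A B r ≤ L := sup_le (iSup_le fun l => hkerA l l.2) (iSup_le hkerB)
  exact ⟨hkerA, hkerB, hcore,
    fun μ _ v hv _ hu => LinearMap.BilinForm.le_orthogonal_add_smul μ hLA' hLB' (hcore hu) v hv,
    fun _ v hv _ hu => hLB v hv _ (hcore hu)⟩

/-- **A bi-Lagrangian subspace lies between the core and the mantle.**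
A bi-Lagrangian subspace `L` for the pencil `{A + λ • B}` contains the kernel of every
regular member of the pencil (hence contains the core `K`), and for every regular member
`A_μ` of the pencil, `L` is contained in the `A_μ`-orthogonal complement of `K`. -/
theorem biLagrangian_between_core_and_mantle
    {V : Type*} [AddCommGroup V] [Module ℂ V] [FiniteDimensional ℂ V]
    (A B : V →ₗ[ℂ] V →ₗ[ℂ] ℂ)
    (hA : ∀ v, A v v = 0) (hB : ∀ v, B v v = 0)
    (r : ℕ)
    (hrB : finrank ℂ (LinearMap.range B) ≤ r)
    (hrA : ∀ l : ℂ, finrank ℂ (LinearMap.range (A + l • B)) ≤ r)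
    (hrmax : r = finrank ℂ (LinearMap.range B) ∨
      ∃ l : ℂ, r = finrank ℂ (LinearMap.range (A + l • B)))
    (L : Submodule ℂ V)
    (hLA : ∀ u ∈ L, ∀ v ∈ L, A u v = 0)
    (hLB : ∀ u ∈ L, ∀ v ∈ L, B u v = 0)
    (hLdim : 2 * (finrank ℂ V - finrank ℂ L) = r) :
    (∀ l : ℂ, finrank ℂ (LinearMap.range (A + l • B)) = r →
        LinearMap.ker (A + l • B) ≤ L) ∧
    (finrank ℂ (LinearMap.range B) = r → LinearMap.ker B ≤ L) ∧
    core A B r ≤ L ∧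
    (∀ μ : ℂ, finrank ℂ (LinearMap.range (A + μ • B)) = r →
      ∀ v ∈ L, ∀ u ∈ core A B r, (A + μ • B) v u = 0) ∧
    (finrank ℂ (LinearMap.range B) = r →
      ∀ v ∈ L, ∀ u ∈ core A B r, B v u = 0) :=
  biLagrangian_between_core_and_mantle_general A B hA hB r L hLA hLB hLdim
end

section
/- Let B be a nondegenerate alternating bilinear form on a finite-dimensional complex vector space V, let P : V → V be self-adjoint with respect to B, and let L be a P-invariant Lagrangian subspace. Denote by V_μ the generalized eigenspace of P for μ ∈ ℂ. Then: (a) V_μ and V_ν are B-orthogonal whenever μ ≠ ν; (b) the restriction of B to each V_μ is nondegenerate; (c) L is the internal direct sum of the subspaces L ∩ V_μ over the eigenvalues μ of P; (d) each L ∩ V_μ is a P-invariant Lagrangian subspace of (V_μ, B restricted to V_μ). -/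
/-!
Self-adjointness gives `(μ - ν) B u v = B u ((P - ν) v) - B ((P - μ) u) v`, so an induction on the
nilpotency orders shows that generalized eigenvectors for distinct eigenvalues are `B`-orthogonal.
Since `V` is the direct sum of the generalized eigenspaces `V_μ`, a vector of `V_μ` orthogonal to
`V_μ` is orthogonal to everything, which gives nondegeneracy on `V_μ`; and the invariant subspace
`L` splits as the sum of the `L ∩ V_μ`. For the dimension count put `W = L ∩ V_μ` and
`S = ⨁_{ν ≠ μ} V_ν`. A vector of `V_μ` orthogonal to `W` is orthogonal to every `L ∩ V_ν`, hence
to `L = L^⊥`, so `W^⊥ ∩ V_μ = W`, and by the modular law `W^⊥ = W ⊕ S`. Comparing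
`dim W^⊥ = dim V - dim W` with `dim (W ⊕ S) = dim W + dim V - dim V_μ` gives `2 dim W = dim V_μ`.
-/

open Module

/-- The generalized eigenspace of the operator `P` for the eigenvalue `μ`. -/
noncomputable def genEig {V : Type*} [AddCommGroup V] [Module ℂ V]
    (P : V →ₗ[ℂ] V) (μ : ℂ) : Submodule ℂ V :=
  ⨆ k : ℕ, LinearMap.ker ((P - μ • (LinearMap.id : V →ₗ[ℂ] V)) ^ k)

open Module.End

lemma genEig_eq_maxGenEigenspace {V : Type*} [AddCommGroup V] [Module ℂ V]
    (P : V →ₗ[ℂ] V) (μ : ℂ) : genEig P μ = maxGenEigenspace P μ := by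
  rw [maxGenEigenspace, genEigenspace_top, genEig]
  congr 1
  ext k
  rw [genEigenspace_nat]
  rfl

namespace LinearMap.BilinForm

variable {K V : Type*} [Field K] [AddCommGroup V] [Module K V]
  {B : LinearMap.BilinForm K V} {P : End K V}

lemma isCompl_maxGenEigenspace_iSup_ne [IsAlgClosed K] [FiniteDimensional K V] (P : End K V)
    (μ : K) : IsCompl (maxGenEigenspace P μ) (⨆ (ν : K) (_ : ν ≠ μ), maxGenEigenspace P ν) :=
  ⟨independent_maxGenEigenspace P μ, codisjoint_iff.mpr <|
    (iSup_split_single (maxGenEigenspace P) μ).symm.trans (iSup_maxGenEigenspace_eq_top P)⟩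

section FiniteDimensional

variable [FiniteDimensional K V]

lemma orthogonal_eq_self_of_isotropic (hB : B.Nondegenerate)
    {L : Submodule K V} (hLiso : ∀ u ∈ L, ∀ v ∈ L, B u v = 0)
    (hLdim : 2 * finrank K L = finrank K V) : B.orthogonal L = L := by
  have hle : L ≤ B.orthogonal L := fun x hx n hn => hLiso n hn x hx
  refine (Submodule.eq_of_le_of_finrank_le hle ?_).symm
  rw [finrank_orthogonal hB L]
  omega

lemma two_mul_finrank_eq_of_orthogonal_eq_sup (hB : B.Nondegenerate)
    {W E S : Submodule K V} (hWE : W ≤ E) (hES : IsCompl E S)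
    (hW : B.orthogonal W = W ⊔ S) : 2 * finrank K W = finrank K E := by
  have hWS : W ⊓ S = ⊥ := (hES.disjoint.mono_left hWE).eq_bot
  have hsup := Submodule.finrank_sup_add_finrank_inf_eq W S
  have hcompl := Submodule.finrank_add_eq_of_isCompl hES
  rw [hWS, finrank_bot, add_zero, ← hW, finrank_orthogonal hB] at hsup
  have := Submodule.finrank_le W
  omega

end FiniteDimensional

section SelfAdjoint

variable (hP : ∀ u v, B (P u) v = B u (P v))
include hP

lemma sub_mul_apply_eq_of_selfAdjoint (μ ν : K) (u v : V) :
    (μ - ν) * B u v = B u ((P - ν • 1) v) - B ((P - μ • 1) u) v := by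
  simp only [LinearMap.sub_apply, LinearMap.smul_apply, one_apply, map_sub, map_smul, smul_eq_mul,
    hP]
  ring

lemma apply_eq_zero_of_pow_sub_smul_apply_eq_zero {μ ν : K} (hμν : μ ≠ ν) (k : ℕ) (u : V)
    (hu : ((P - μ • 1) ^ k) u = 0) (l : ℕ) (v : V) (hv : ((P - ν • 1) ^ l) v = 0) :
    B u v = 0 := by
  induction k generalizing u l v with
  | zero => simp_all
  | succ k ihk =>
    induction l generalizing v with
    | zero => simp_all
    | succ l ihl =>
      have hu' : B ((P - μ • 1) u) v = 0 := ihk _ (by rwa [← Module.End.mul_apply, ← pow_succ])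
        (l + 1) v hv
      have hv' : B u ((P - ν • 1) v) = 0 := ihl _ (by rwa [← Module.End.mul_apply, ← pow_succ])
      have h := sub_mul_apply_eq_of_selfAdjoint hP μ ν u v
      rw [hu', hv', sub_zero] at h
      exact (mul_eq_zero.mp h).resolve_left (sub_ne_zero.mpr hμν)

lemma apply_eq_zero_of_mem_maxGenEigenspace {μ ν : K} (hμν : μ ≠ ν) {u v : V}
    (hu : u ∈ maxGenEigenspace P μ) (hv : v ∈ maxGenEigenspace P ν) : B u v = 0 := by
  obtain ⟨k, hk⟩ := (mem_maxGenEigenspace P μ u).mp hu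
  obtain ⟨l, hl⟩ := (mem_maxGenEigenspace P ν v).mp hv
  exact apply_eq_zero_of_pow_sub_smul_apply_eq_zero hP hμν k u hk l v hl

variable [IsAlgClosed K] [FiniteDimensional K V]

lemma eq_zero_of_mem_maxGenEigenspace_of_forall (hB : B.SeparatingLeft) {μ : K} {u : V}
    (hu : u ∈ maxGenEigenspace P μ) (h : ∀ v ∈ maxGenEigenspace P μ, B u v = 0) : u = 0 := by
  refine hB u fun v => ?_
  have hker : ⨆ ν, maxGenEigenspace P ν ≤ LinearMap.ker (B u) := by
    refine iSup_le fun ν x hx => ?_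
    by_cases hνμ : ν = μ
    · exact h x (hνμ ▸ hx)
    · exact apply_eq_zero_of_mem_maxGenEigenspace hP (Ne.symm hνμ) hu hx
  exact hker (by simp [iSup_maxGenEigenspace_eq_top P])

lemma orthogonal_inf_maxGenEigenspace_le {L : Submodule K V} (hLinv : ∀ u ∈ L, P u ∈ L)
    (hLL : B.orthogonal L = L) (μ : K) :
    B.orthogonal (L ⊓ maxGenEigenspace P μ) ⊓ maxGenEigenspace P μ ≤
      L ⊓ maxGenEigenspace P μ := by
  rintro x ⟨hxW, hxE⟩
  refine ⟨?_, hxE⟩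
  have hL : L ≤ LinearMap.ker (B.flip x) := by
    rw [Submodule.eq_iSup_inf_genEigenspace ⊤ hLinv (iSup_maxGenEigenspace_eq_top P)]
    refine iSup_le fun ν n hn => ?_
    by_cases hνμ : ν = μ
    · subst hνμ
      exact hxW n hn
    · exact apply_eq_zero_of_mem_maxGenEigenspace hP hνμ hn.2 hxE
  rw [← hLL]
  exact fun n hn => hL hn

lemma two_mul_finrank_inf_maxGenEigenspace (hB : B.Nondegenerate) {L : Submodule K V}
    (hLinv : ∀ u ∈ L, P u ∈ L) (hLL : B.orthogonal L = L) (μ : K) :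
    2 * finrank K ↥(L ⊓ maxGenEigenspace P μ) = finrank K (maxGenEigenspace P μ) := by
  set E := maxGenEigenspace P μ
  set W := L ⊓ E
  set S := ⨆ (ν : K) (_ : ν ≠ μ), maxGenEigenspace P ν
  have hES : IsCompl E S := isCompl_maxGenEigenspace_iSup_ne P μ
  have hSW : S ≤ B.orthogonal W := iSup₂_le fun ν hνμ x hx n hn =>
    apply_eq_zero_of_mem_maxGenEigenspace hP (Ne.symm hνμ) hn.2 hx
  have hWW : E ⊓ B.orthogonal W = W :=
    le_antisymm (inf_comm E _ ▸ orthogonal_inf_maxGenEigenspace_le hP hLinv hLL μ)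
      (le_inf inf_le_right fun x hx n hn => hLL.ge hx.1 n hn.1)
  refine two_mul_finrank_eq_of_orthogonal_eq_sup hB inf_le_right hES ?_
  calc B.orthogonal W = (S ⊔ E) ⊓ B.orthogonal W := by rw [hES.symm.sup_eq_top, top_inf_eq]
    _ = S ⊔ E ⊓ B.orthogonal W := sup_inf_assoc_of_le _ hSW
    _ = W ⊔ S := by rw [hWW, sup_comm]

end SelfAdjoint

end LinearMap.BilinForm

open LinearMap.BilinForm

/-- **Eigendecomposition of invariant Lagrangian subspaces.**
Let `B` be a nondegenerate alternating bilinear form on a finite-dimensional complex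
vector space `V`, let `P` be self-adjoint with respect to `B`, and let `L` be a
`P`-invariant Lagrangian subspace.  Then: (a) generalized eigenspaces for distinct
eigenvalues are `B`-orthogonal; (b) the restriction of `B` to each generalized
eigenspace `V_μ` is nondegenerate; (c) `L` is the internal direct sum of the subspaces
`L ⊓ V_μ`; (d) each `L ⊓ V_μ` is a `P`-invariant Lagrangian subspace of
`(V_μ, B|_{V_μ})`. -/
theorem invariant_lagrangian_eigendecomposition
    {V : Type*} [AddCommGroup V] [Module ℂ V] [FiniteDimensional ℂ V]
    (B : V →ₗ[ℂ] V →ₗ[ℂ] ℂ)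
    (hBalt : ∀ v, B v v = 0)
    (hBnd : ∀ v, (∀ u, B v u = 0) → v = 0)
    (P : V →ₗ[ℂ] V)
    (hP : ∀ u v, B (P u) v = B u (P v))
    (L : Submodule ℂ V)
    (hLiso : ∀ u ∈ L, ∀ v ∈ L, B u v = 0)
    (hLdim : 2 * finrank ℂ L = finrank ℂ V)
    (hLinv : ∀ u ∈ L, P u ∈ L) :
    (∀ μ ν : ℂ, μ ≠ ν → ∀ u ∈ genEig P μ, ∀ v ∈ genEig P ν, B u v = 0) ∧
    (∀ μ : ℂ, ∀ u ∈ genEig P μ, (∀ v ∈ genEig P μ, B u v = 0) → u = 0) ∧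
    (L = ⨆ μ : ℂ, L ⊓ genEig P μ) ∧
    (∀ μ : ℂ, Disjoint (L ⊓ genEig P μ)
      (⨆ (ν : ℂ) (_ : ν ≠ μ), L ⊓ genEig P ν)) ∧
    (∀ μ : ℂ,
      (∀ u ∈ L ⊓ genEig P μ, P u ∈ L ⊓ genEig P μ) ∧
      (∀ u ∈ L ⊓ genEig P μ, ∀ v ∈ L ⊓ genEig P μ, B u v = 0) ∧
      2 * finrank ℂ ↥(L ⊓ genEig P μ) = finrank ℂ ↥(genEig P μ)) := by
  simp only [genEig_eq_maxGenEigenspace]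
  have hB : B.Nondegenerate :=
    (IsAlt.isRefl hBalt).nondegenerate_iff_separatingLeft.mpr hBnd
  have hLL := orthogonal_eq_self_of_isotropic hB hLiso hLdim
  refine ⟨fun μ ν hμν u hu v hv => apply_eq_zero_of_mem_maxGenEigenspace hP hμν hu hv,
    fun μ u hu h => eq_zero_of_mem_maxGenEigenspace_of_forall hP hBnd hu h,
    Submodule.eq_iSup_inf_genEigenspace ⊤ hLinv (iSup_maxGenEigenspace_eq_top P),
    fun μ => (independent_maxGenEigenspace P μ).mono inf_le_right
      (iSup₂_mono fun _ _ => inf_le_right),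
    fun μ => ⟨fun u hu => ⟨hLinv u hu.1, mapsTo_maxGenEigenspace_of_comm (Commute.refl P) μ hu.2⟩,
      fun u hu v hv => hLiso u hu.1 v hv.1, ?_⟩⟩
  rw [genEig_eq_maxGenEigenspace]
  exact two_mul_finrank_inf_maxGenEigenspace hP hB hLinv hLL μ
end

section
/- Let B be a nondegenerate alternating bilinear form on a finite-dimensional complex vector space V and P : V → V self-adjoint with respect to B. Then every B-isotropic P-invariant subspace U ⊆ V is contained in some P-invariant Lagrangian subspace of V. -/
/-!
Among the `B`-isotropic `P`-invariant subspaces containing `U` take a maximal one `L`. If `L`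
were not Lagrangian, then `L < Lᗮ`, and `Lᗮ` is again `P`-invariant because `P` is self-adjoint.
The operator induced by `P` on `Lᗮ / L` has an eigenvector, whose lift `v ∈ Lᗮ \ L` satisfies
`P v - μ v ∈ L`; then `L ⊔ ℂ v` is isotropic (as `B v v = 0`) and `P`-invariant, contradicting
maximality.
-/

open Module
open LinearMap (BilinForm)

namespace Module.End

theorem sup_span_singleton_mem_invtSubmodule {R M : Type*} [Ring R] [AddCommGroup M] [Module R M]
    {f : End R M} {L : Submodule R M} {v : M} {μ : R} (hL : L ∈ f.invtSubmodule)
    (hv : f v - μ • v ∈ L) : L ⊔ R ∙ v ∈ f.invtSubmodule := by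
  have hvL : v ∈ L ⊔ R ∙ v := Submodule.mem_sup_right (Submodule.mem_span_singleton_self v)
  rw [mem_invtSubmodule]
  refine sup_le (hL.trans (Submodule.comap_mono (le_sup_left : L ≤ L ⊔ R ∙ v))) ?_
  rw [Submodule.span_singleton_le_iff_mem, Submodule.mem_comap, ← sub_add_cancel (f v) (μ • v)]
  exact add_mem (Submodule.mem_sup_left hv) (Submodule.smul_mem _ μ hvL)

variable {K V : Type*} [Field K] [IsAlgClosed K] [AddCommGroup V] [Module K V]
  [FiniteDimensional K V] {f : End K V} {L : Submodule K V}

theorem exists_notMem_sub_smul_mem (hL : L ∈ f.invtSubmodule) (hL_ne_top : L ≠ ⊤) :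
    ∃ v ∉ L, ∃ μ : K, f v - μ • v ∈ L := by
  have : Nontrivial (V ⧸ L) := Submodule.Quotient.nontrivial_iff.2 hL_ne_top
  obtain ⟨μ, hμ⟩ := exists_eigenvalue (L.mapQ L f hL)
  obtain ⟨x, hx⟩ := hμ.exists_hasEigenvector
  obtain ⟨v, rfl⟩ := Submodule.Quotient.mk_surjective L x
  refine ⟨v, fun hv => hx.2 ((Submodule.Quotient.mk_eq_zero L).2 hv), μ, ?_⟩
  rw [← Submodule.Quotient.eq, Submodule.Quotient.mk_smul,
    ← Submodule.mapQ_apply L L f v (h := hL)]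
  exact hx.apply_eq_smul

theorem exists_sup_span_singleton_mem_invtSubmodule {E : Submodule K V} (hLE : L < E)
    (hL : L ∈ f.invtSubmodule) (hE : E ∈ f.invtSubmodule) :
    ∃ v ∈ E, v ∉ L ∧ L ⊔ K ∙ v ∈ f.invtSubmodule := by
  have hL' : L.comap E.subtype ∈ invtSubmodule (f.restrict hE) := fun x hx => hL hx
  have hL'_ne_top : L.comap E.subtype ≠ ⊤ := by
    obtain ⟨v, hvE, hvL⟩ := SetLike.exists_of_lt hLE
    exact fun h => hvL (h ▸ Submodule.mem_top : (⟨v, hvE⟩ : E) ∈ L.comap E.subtype)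
  obtain ⟨v, hvL, μ, hv⟩ := exists_notMem_sub_smul_mem hL' hL'_ne_top
  exact ⟨v, v.2, hvL,
    sup_span_singleton_mem_invtSubmodule hL (show f v - μ • v ∈ L from hv)⟩

end Module.End

namespace LinearMap.BilinForm

def IsIsotropic {R M : Type*} [CommSemiring R] [AddCommMonoid M] [Module R M]
    (B : BilinForm R M) (L : Submodule R M) : Prop :=
  ∀ u ∈ L, ∀ v ∈ L, B u v = 0

section CommRing

variable {R M : Type*} [CommRing R] [AddCommGroup M] [Module R M] {B : BilinForm R M}
  {L : Submodule R M}

theorem IsIsotropic.le_orthogonal (hL : B.IsIsotropic L) : L ≤ B.orthogonal L :=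
  fun u hu v hv => hL v hv u hu

theorem orthogonal_mem_invtSubmodule {P : End R M} (hP : LinearMap.IsSelfAdjoint B P)
    (hL : L ∈ P.invtSubmodule) : B.orthogonal L ∈ P.invtSubmodule :=
  fun x hx u hu => (hP u x).symm.trans (hx (P u) (hL hu))

theorem IsIsotropic.sup_span_singleton (hB : B.IsAlt) (hL : B.IsIsotropic L) {v : M}
    (hv : v ∈ B.orthogonal L) : B.IsIsotropic (L ⊔ R ∙ v) := by
  have hvL : ∀ l ∈ L, B v l = 0 := fun l hl => hB.isRefl _ _ (hv l hl)
  intro x hx y hy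
  obtain ⟨l, hl, _, hx', rfl⟩ := Submodule.mem_sup.1 hx
  obtain ⟨m, hm, _, hy', rfl⟩ := Submodule.mem_sup.1 hy
  obtain ⟨a, rfl⟩ := Submodule.mem_span_singleton.1 hx'
  obtain ⟨b, rfl⟩ := Submodule.mem_span_singleton.1 hy'
  simp [hL l hl m hm, hv l hl, hvL m hm, hB v]

end CommRing

variable {K V : Type*} [Field K] [AddCommGroup V] [Module K V] [FiniteDimensional K V]
  {B : BilinForm K V} {L : Submodule K V}

theorem IsIsotropic.two_mul_finrank_le (hB : B.Nondegenerate) (hL : B.IsIsotropic L) :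
    2 * finrank K L ≤ finrank K V := by
  have hle := Submodule.finrank_mono hL.le_orthogonal
  rw [finrank_orthogonal hB] at hle
  have := Submodule.finrank_le L
  omega

theorem IsIsotropic.lt_orthogonal (hB : B.Nondegenerate) (hL : B.IsIsotropic L)
    (hlt : 2 * finrank K L < finrank K V) : L < B.orthogonal L := by
  refine Submodule.lt_of_le_of_finrank_lt_finrank hL.le_orthogonal ?_
  rw [finrank_orthogonal hB]
  omega

variable [IsAlgClosed K] {P : End K V}

theorem IsIsotropic.exists_gt_mem_invtSubmodule (hBalt : B.IsAlt) (hB : B.Nondegenerate)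
    (hP : LinearMap.IsSelfAdjoint B P) (hL : B.IsIsotropic L) (hLP : L ∈ P.invtSubmodule)
    (hlt : 2 * finrank K L < finrank K V) :
    ∃ M, L < M ∧ B.IsIsotropic M ∧ M ∈ P.invtSubmodule := by
  obtain ⟨v, hv, hvL, hinv⟩ := End.exists_sup_span_singleton_mem_invtSubmodule
    (hL.lt_orthogonal hB hlt) hLP (orthogonal_mem_invtSubmodule hP hLP)
  refine ⟨L ⊔ K ∙ v, SetLike.lt_iff_le_and_exists.2 ⟨le_sup_left, v, ?_, hvL⟩,
    hL.sup_span_singleton hBalt hv, hinv⟩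
  exact Submodule.mem_sup_right (Submodule.mem_span_singleton_self v)

theorem two_mul_finrank_eq_of_maximal (hBalt : B.IsAlt) (hB : B.Nondegenerate)
    (hP : LinearMap.IsSelfAdjoint B P)
    (hL : Maximal (fun M => B.IsIsotropic M ∧ M ∈ P.invtSubmodule) L) :
    2 * finrank K L = finrank K V := by
  refine (hL.1.1.two_mul_finrank_le hB).eq_of_not_lt fun hlt => ?_
  obtain ⟨M, hLM, hM⟩ := hL.1.1.exists_gt_mem_invtSubmodule hBalt hB hP hL.1.2 hlt
  exact hL.not_gt hM hLM

end LinearMap.BilinForm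

open LinearMap.BilinForm in
/-- **Every bi-isotropic admissible subspace extends to a bi-Lagrangian subspace.**
Let `B` be a nondegenerate alternating bilinear form on a finite-dimensional complex
vector space `V` and `P : V → V` self-adjoint with respect to `B`.  Then every
`B`-isotropic `P`-invariant subspace `U` is contained in some `P`-invariant Lagrangian
subspace of `V`. -/
theorem isotropic_invariant_extends_to_invariant_lagrangian
    {V : Type*} [AddCommGroup V] [Module ℂ V] [FiniteDimensional ℂ V]
    (B : V →ₗ[ℂ] V →ₗ[ℂ] ℂ)
    (hBalt : ∀ v, B v v = 0)
    (hBnd : ∀ v, (∀ u, B v u = 0) → v = 0)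
    (P : V →ₗ[ℂ] V)
    (hP : ∀ u v, B (P u) v = B u (P v))
    (U : Submodule ℂ V)
    (hUiso : ∀ u ∈ U, ∀ v ∈ U, B u v = 0)
    (hUinv : ∀ u ∈ U, P u ∈ U) :
    ∃ L : Submodule ℂ V,
      U ≤ L ∧
      (∀ u ∈ L, ∀ v ∈ L, B u v = 0) ∧
      2 * finrank ℂ L = finrank ℂ V ∧
      ∀ u ∈ L, P u ∈ L := by
  have hB : B.Nondegenerate :=
    (LinearMap.IsAlt.isRefl hBalt).nondegenerate_iff_separatingLeft.2 hBnd
  obtain ⟨L, hUL, hL⟩ := exists_maximal_ge_of_wellFoundedGT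
    (fun M => IsIsotropic B M ∧ M ∈ End.invtSubmodule P) U ⟨hUiso, hUinv⟩
  exact ⟨L, hUL, hL.1.1, two_mul_finrank_eq_of_maximal hBalt hB hP hL, hL.1.2⟩
end

section
/- Let B be a nondegenerate alternating bilinear form on a finite-dimensional complex vector space V, and let P be nilpotent, self-adjoint with respect to B, and satisfy dim ker P^k = 2·min(k, n) for every k ≥ 0 (so (V, B, P) is a single Jordan block J_{0,2n}; in particular dim V = 2n). Let L be a P-invariant Lagrangian subspace and let h be its height, i.e. the least h with L ⊆ ker P^h. Then 2h ≥ n, and for every v ∈ L with v ∉ ker P^{h−1} one has L = span{v, P v, …, P^{h−1} v} + ker P^{n−h}. -/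
/-!
A Lagrangian `L` is its own `B`-orthogonal, and self-adjointness of `P` makes
`range P^h = ker P^(n-h)` orthogonal to `L ⊆ ker P^h`; hence `ker P^(n-h) ⊆ L`.
Together with the cyclic span `W` of `v` this gives a subspace of `L`; applying `P^(n-h)`
kills `ker P^(n-h)` and maps `W` onto the span of `P^(n-h) v, …, P^(h-1) v`, which has
dimension `2h - n`, so `W ⊔ ker P^(n-h)` has dimension `2(n-h) + (2h-n) = n = dim L`.
-/

open Module LinearMap Submodule

section Lagrangian

variable {R M : Type*} [CommRing R] [AddCommGroup M] [Module R M]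

theorem LinearMap.IsAdjointPair.pow {B : M →ₗ[R] M →ₗ[R] R} {f g : Module.End R M}
    (hfg : IsAdjointPair B B f g) (k : ℕ) : IsAdjointPair B B ⇑(f ^ k) ⇑(g ^ k) := by
  induction k with
  | zero => exact isAdjointPair_one
  | succ k ih => rw [pow_succ' f, pow_succ g]; exact hfg.mul ih

theorem LinearMap.BilinForm.range_pow_le_of_orthogonal_eq_self {B : LinearMap.BilinForm R M}
    {L : Submodule R M} {P : Module.End R M} (hP : IsAdjointPair B B P P)
    (hL : B.orthogonal L = L) {h : ℕ} (hh : L ≤ ker (P ^ h)) : range (P ^ h) ≤ L := by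
  rintro _ ⟨x, rfl⟩
  rw [← hL]
  intro y hy
  rw [← hP.pow h, mem_ker.mp (hh hy), map_zero, LinearMap.zero_apply]

theorem LinearMap.BilinForm.orthogonal_eq_self_of_isotropic_s8 {K V : Type*} [Field K]
    [AddCommGroup V] [Module K V] [FiniteDimensional K V] {B : LinearMap.BilinForm K V}
    {L : Submodule K V} (hB : B.Nondegenerate) (hL : ∀ u ∈ L, ∀ v ∈ L, B u v = 0)
    (hdim : 2 * finrank K L = finrank K V) : B.orthogonal L = L := by
  have hle : L ≤ B.orthogonal L := fun v hv u hu => hL u hu v hv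
  refine (eq_of_le_of_finrank_le hle ?_).symm
  rw [finrank_orthogonal hB]
  omega

end Lagrangian

section Cyclic

variable {K V : Type*} [Field K] [AddCommGroup V] [Module K V] (P : Module.End K V)

theorem Module.End.linearIndependent_pow_apply {v : V} {h : ℕ} (hv : (P ^ (h - 1)) v ≠ 0)
    (hv' : (P ^ h) v = 0) : LinearIndependent K fun i : Fin h => (P ^ (i : ℕ)) v := by
  induction h generalizing v with
  | zero => exact linearIndependent_empty_type
  | succ h ih =>
    have htail : Fin.tail (fun i : Fin (h + 1) => (P ^ (i : ℕ)) v) =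
        fun i : Fin h => (P ^ (i : ℕ)) (P v) := by
      funext i
      simp [Fin.tail, pow_succ]
    rw [linearIndependent_finSucc, htail]
    constructor
    · rcases h with _ | h
      · exact linearIndependent_empty_type
      · exact ih (by simpa [← mul_apply, ← pow_succ] using hv)
          (by simpa [← mul_apply, ← pow_succ] using hv')
    · have hspan : span K (Set.range fun i : Fin h => (P ^ (i : ℕ)) (P v)) ≤ ker (P ^ h) := by
        refine span_le.mpr (Set.range_subset_iff.mpr fun i => ?_)
        rw [SetLike.mem_coe, mem_ker, ← mul_apply, ← mul_apply, ← pow_add, ← pow_succ]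
        exact pow_map_zero_of_le (by omega) hv'
      exact fun hmem => hv (by simpa using hspan hmem)

theorem LinearMap.finrank_map_add_finrank_ker_of_ker_le {W : Type*} [AddCommGroup W] [Module K W]
    [FiniteDimensional K V] (f : V →ₗ[K] W) {p : Submodule K V} (hp : ker f ≤ p) :
    finrank K (p.map f) + finrank K (ker f) = finrank K p := by
  rw [← range_domRestrict, ← (comapSubtypeEquivOfLe hp).finrank_eq, ← ker_domRestrict]
  exact finrank_range_add_finrank_ker _

theorem Module.End.le_finrank_span_pow_apply_sup_ker_pow [FiniteDimensional K V] {v : V} {h : ℕ}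
    (hv : (P ^ (h - 1)) v ≠ 0) (hv' : (P ^ h) v = 0) (k : ℕ) :
    h - k + finrank K (ker (P ^ k)) ≤
      finrank K ↥(span K (Set.range fun i : Fin h => (P ^ (i : ℕ)) v) ⊔ ker (P ^ k)) := by
  set W := span K (Set.range fun i : Fin h => (P ^ (i : ℕ)) v)
  have hshift : LinearIndependent K fun i : Fin (h - k) => (P ^ (k + i : ℕ)) v :=
    (P.linearIndependent_pow_apply hv hv').comp
      (fun i : Fin (h - k) => (⟨k + i, by omega⟩ : Fin h))
      fun i j hij => by simpa [Fin.ext_iff] using hij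
  have hmap : span K (Set.range fun i : Fin (h - k) => (P ^ (k + i : ℕ)) v) ≤
      (W ⊔ ker (P ^ k)).map (P ^ k) := by
    refine span_le.mpr (Set.range_subset_iff.mpr fun i => ⟨(P ^ (i : ℕ)) v, ?_, ?_⟩)
    · exact mem_sup_left (subset_span ⟨⟨i, by omega⟩, rfl⟩)
    · rw [← mul_apply, ← pow_add]
  have hle := finrank_mono hmap
  rw [finrank_span_eq_card hshift, Fintype.card_fin] at hle
  have hsum := (P ^ k).finrank_map_add_finrank_ker_of_ker_le (le_sup_right (a := W))
  omega

end Cyclic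

section JordanBlock

variable {K V : Type*} [Field K] [AddCommGroup V] [Module K V] {P : Module.End K V} {n : ℕ}

theorem Module.End.pow_eq_zero_of_finrank_ker_pow [FiniteDimensional K V]
    (hJ : ∀ k : ℕ, finrank K (ker (P ^ k)) = 2 * min k n) (hP : IsNilpotent P) : P ^ n = 0 := by
  obtain ⟨N, hN⟩ := hP
  have hV : finrank K V = 2 * min N n := by rw [← hJ N, hN, ker_zero, finrank_top]
  have := hJ n
  have := finrank_le (ker (P ^ n))
  rw [← ker_eq_top]
  exact eq_top_of_finrank_eq (by omega)

theorem Module.End.finrank_eq_two_mul_of_finrank_ker_pow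
    (hJ : ∀ k : ℕ, finrank K (ker (P ^ k)) = 2 * min k n) (hPn : P ^ n = 0) :
    finrank K V = 2 * n := by
  have := hJ n
  rwa [hPn, ker_zero, finrank_top, min_self] at this

theorem Module.End.range_pow_eq_ker_pow_sub [FiniteDimensional K V]
    (hJ : ∀ k : ℕ, finrank K (ker (P ^ k)) = 2 * min k n) (hPn : P ^ n = 0) {h : ℕ}
    (hh : h ≤ n) : range (P ^ h) = ker (P ^ (n - h)) := by
  have hle : range (P ^ h) ≤ ker (P ^ (n - h)) := by
    rintro _ ⟨x, rfl⟩
    rw [mem_ker, ← mul_apply, ← pow_add, Nat.sub_add_cancel hh, hPn, LinearMap.zero_apply]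
  refine eq_of_le_of_finrank_le hle ?_
  have := finrank_range_add_finrank_ker (P ^ h)
  rw [hJ, Module.End.finrank_eq_two_mul_of_finrank_ker_pow hJ hPn] at this
  rw [hJ]
  omega

end JordanBlock

theorem oneJordanBlock_biLagrangian_canonical_form_general
    {V : Type*} [AddCommGroup V] [Module ℂ V] [FiniteDimensional ℂ V]
    (B : V →ₗ[ℂ] V →ₗ[ℂ] ℂ)
    (hBnd : ∀ v, (∀ u, B v u = 0) → v = 0)
    (P : V →ₗ[ℂ] V)
    (hPsa : ∀ u v, B (P u) v = B u (P v))
    (hPnil : IsNilpotent P)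
    (n : ℕ)
    (hJ : ∀ k : ℕ, finrank ℂ (LinearMap.ker (P ^ k)) = 2 * min k n)
    (L : Submodule ℂ V)
    (hLiso : ∀ u ∈ L, ∀ v ∈ L, B u v = 0)
    (hLdim : 2 * finrank ℂ L = finrank ℂ V)
    (hLinv : ∀ u ∈ L, P u ∈ L)
    (h : ℕ)
    (hh : L ≤ LinearMap.ker (P ^ h)) :
    n ≤ 2 * h ∧
    ∀ v ∈ L, v ∉ LinearMap.ker (P ^ (h - 1)) →
      L = Submodule.span ℂ (Set.range fun i : Fin h => (P ^ (i : ℕ)) v) ⊔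
          LinearMap.ker (P ^ (n - h)) := by
  have hPn : P ^ n = 0 := End.pow_eq_zero_of_finrank_ker_pow hJ hPnil
  have hLn : finrank ℂ L = n := by have := End.finrank_eq_two_mul_of_finrank_ker_pow hJ hPn; omega
  have hn : n ≤ 2 * h := by have := finrank_mono hh; rw [hJ, hLn] at this; omega
  refine ⟨hn, fun v hvL hv => ?_⟩
  replace hv : (P ^ (h - 1)) v ≠ 0 := hv
  have hhn : h ≤ n := by
    by_contra! hlt
    exact hv (End.pow_map_zero_of_le (k := n) (by omega) (by rw [hPn, LinearMap.zero_apply]))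
  have hLL : BilinForm.orthogonal B L = L :=
    BilinForm.orthogonal_eq_self_of_isotropic_s8 (.ofSeparatingLeft hBnd) hLiso hLdim
  have hKL : ker (P ^ (n - h)) ≤ L := by
    rw [← End.range_pow_eq_ker_pow_sub hJ hPn hhn]
    exact BilinForm.range_pow_le_of_orthogonal_eq_self hPsa hLL hh
  have hWL : span ℂ (Set.range fun i : Fin h => (P ^ (i : ℕ)) v) ≤ L :=
    span_le.mpr (Set.range_subset_iff.mpr fun i => End.pow_apply_mem_of_forall_mem _ hLinv v hvL)
  refine (eq_of_le_of_finrank_le (sup_le hWL hKL) ?_).symm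
  have := End.le_finrank_span_pow_apply_sup_ker_pow P hv (hh hvL) (n - h)
  rw [hJ] at this
  omega

/-- **Canonical description of bi-Lagrangian subspaces of a single Jordan block.**
Let `(V, B, P)` be a single Jordan block `J_{0,2n}`: `B` a nondegenerate alternating
form, `P` nilpotent and self-adjoint with `dim ker P^k = 2 · min(k, n)` for all `k`.
If `L` is a `P`-invariant Lagrangian subspace of height `h` (the least `h` with
`L ⊆ ker P^h`), then `2h ≥ n`, and for every `v ∈ L` with `v ∉ ker P^{h-1}` one has
`L = span {v, P v, …, P^{h-1} v} + ker P^{n-h}`. -/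
theorem oneJordanBlock_biLagrangian_canonical_form
    {V : Type*} [AddCommGroup V] [Module ℂ V] [FiniteDimensional ℂ V]
    (B : V →ₗ[ℂ] V →ₗ[ℂ] ℂ)
    (hBalt : ∀ v, B v v = 0)
    (hBnd : ∀ v, (∀ u, B v u = 0) → v = 0)
    (P : V →ₗ[ℂ] V)
    (hPsa : ∀ u v, B (P u) v = B u (P v))
    (hPnil : IsNilpotent P)
    (n : ℕ)
    (hJ : ∀ k : ℕ, finrank ℂ (LinearMap.ker (P ^ k)) = 2 * min k n)
    (L : Submodule ℂ V)
    (hLiso : ∀ u ∈ L, ∀ v ∈ L, B u v = 0)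
    (hLdim : 2 * finrank ℂ L = finrank ℂ V)
    (hLinv : ∀ u ∈ L, P u ∈ L)
    (h : ℕ)
    (hh : L ≤ LinearMap.ker (P ^ h))
    (hmin : ∀ m : ℕ, L ≤ LinearMap.ker (P ^ m) → h ≤ m) :
    n ≤ 2 * h ∧
    ∀ v ∈ L, v ∉ LinearMap.ker (P ^ (h - 1)) →
      L = Submodule.span ℂ (Set.range fun i : Fin h => (P ^ (i : ℕ)) v) ⊔
          LinearMap.ker (P ^ (n - h)) :=
  oneJordanBlock_biLagrangian_canonical_form_general B hBnd P hPsa hPnil n hJ L hLiso hLdim hLinv h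
    hh
end

section
/- Let B be a nondegenerate alternating bilinear form on a finite-dimensional complex vector space V and let P be self-adjoint with respect to B and nilpotent of index n (P^n = 0, P^{n−1} ≠ 0). Let L be a P-invariant Lagrangian subspace with L ⊄ ker P^{n−1}. Then there exist P-invariant subspaces V₁, V₂ ⊆ V such that: V = V₁ ⊕ V₂; B(v₁, v₂) = 0 for all v₁ ∈ V₁, v₂ ∈ V₂; dim V₁ = 2n and dim(V₁ ∩ ker P) = 2 (so V₁ is a single Jordan block J_{0,2n}); L = (L ∩ V₁) ⊕ (L ∩ V₂); and L ∩ V₁ ⊄ ker P^{n−1}. -/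
/-!
Pick `e ∈ L` with `P^(n-1) e ≠ 0` and `f` with `B (P^(n-1) e) f ≠ 0`, and let `V₁` be the
span of the two chains `P^i e`, `P^i f` (`i < n`). Isotropy of `L` kills the pairings among
the `P^i e`, while self-adjointness makes `B (P^i e) (P^j f)` a function of `i + j` that
vanishes for `i + j ≥ n` and not for `i + j = n - 1`. So the Gram matrix of the chains is
block anti-triangular with Hankel blocks, hence invertible: the chains are independent and
`V = V₁ ⊕ V₁^⊥`. A vector of `V₁ ∩ ker P` is orthogonal to every `P^(i+1) e`, `P^(i+1) f`,
so it is determined by its pairings with `e` and `f`; this bounds the kernel by `2`. Finally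
the `V₁`-component of `l ∈ L` pairs to zero with every `P^i e`, so it has no `f`-chain part
and lies in `L`.
-/

open Module
open LinearMap (BilinForm IsAdjointPair)

theorem eq_zero_of_hankel_sum_mul_eq_zero {K : Type*} [Semiring K] [NoZeroDivisors K] {n : ℕ}
    {c : ℕ → K} (hc : c (n - 1) ≠ 0) (hc0 : ∀ k, n ≤ k → c k = 0) {b : Fin n → K}
    (hb : ∀ j : Fin n, ∑ i, b i * c (j + i) = 0) : b = 0 := by
  suffices ∀ i, b i = 0 from funext this
  intro i
  induction i using WellFoundedLT.induction with
  | _ i ih =>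
  -- the row `j = n - 1 - i` meets `b i` at `c (n - 1)`; earlier `b k` vanish by induction
  -- and later ones meet `c k = 0`
  have hi := hb ⟨n - 1 - i, by omega⟩
  rw [Finset.sum_eq_single i] at hi
  · simpa [show n - 1 - i + (i : ℕ) = n - 1 by omega, hc] using hi
  · intro k _ hki
    rcases lt_or_gt_of_ne hki with hlt | hgt
    · rw [ih k hlt, zero_mul]
    · rw [hc0 _ (by simp; omega), mul_zero]
  · simp

theorem LinearMap.IsAdjointPair.pow_s13 {R M : Type*} [CommSemiring R] [AddCommMonoid M] [Module R M]
    {B : BilinForm R M} {P : End R M} (hP : IsAdjointPair B B P P) (k : ℕ) :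
    IsAdjointPair B B ⇑(P ^ k) ⇑(P ^ k) := by
  induction k with
  | zero => exact LinearMap.isAdjointPair_one
  | succ k ih => nth_rw 2 [pow_succ']; rw [pow_succ]; exact ih.mul hP

theorem LinearMap.BilinForm.mem_orthogonal_span_iff {R M : Type*} [CommSemiring R]
    [AddCommMonoid M] [Module R M] {B : BilinForm R M} {s : Set M} {v : M} :
    v ∈ B.orthogonal (Submodule.span R s) ↔ ∀ x ∈ s, B x v = 0 := by
  simpa [SetLike.le_def, Set.subset_def] using Submodule.span_le (p := LinearMap.ker (B.flip v))

theorem LinearMap.BilinForm.orthogonal_mem_invtSubmodule_s13 {R M : Type*} [CommSemiring R]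
    [AddCommMonoid M] [Module R M] {B : BilinForm R M} {P : End R M}
    (hP : IsAdjointPair B B P P) {W : Submodule R M} (hW : W ∈ P.invtSubmodule) :
    B.orthogonal W ∈ P.invtSubmodule := fun v hv x hx => by
  rw [← hP]; exact hv _ (hW hx)

theorem LinearMap.IsAdjointPair.apply_pow_apply_pow {R M : Type*} [CommSemiring R]
    [AddCommMonoid M] [Module R M] {B : BilinForm R M} {P : End R M}
    (hP : IsAdjointPair B B P P) (i j : ℕ) (x y : M) :
    B ((P ^ i) x) ((P ^ j) y) = B ((P ^ (i + j)) x) y := by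
  rw [← hP.pow_s13 j, ← Module.End.mul_apply, ← pow_add, add_comm]

theorem Submodule.eq_inf_sup_inf_of_isCompl {R M : Type*} [Ring R] [AddCommGroup M]
    [Module R M] {L V₁ V₂ : Submodule R M} (hV : IsCompl V₁ V₂)
    (hL : ∀ v₁ ∈ V₁, ∀ v₂ ∈ V₂, v₁ + v₂ ∈ L → v₁ ∈ L) : L = L ⊓ V₁ ⊔ L ⊓ V₂ := by
  refine le_antisymm (fun l hl => ?_) (sup_le inf_le_left inf_le_left)
  obtain ⟨v₁, hv₁, v₂, hv₂, rfl⟩ :=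
    Submodule.mem_sup.1 (hV.sup_eq_top ▸ Submodule.mem_top (x := l))
  have hv₁L := hL v₁ hv₁ v₂ hv₂ hl
  have hv₂L : v₂ ∈ L := by simpa using L.sub_mem hl hv₁L
  exact Submodule.add_mem_sup ⟨hv₁L, hv₁⟩ ⟨hv₂L, hv₂⟩

section chainPair

variable {K V : Type*} [Field K] [AddCommGroup V] [Module K V]

def chainPair (P : End K V) (n : ℕ) (e f : V) : Fin n ⊕ Fin n → V :=
  Sum.elim (fun i => (P ^ (i : ℕ)) e) (fun i => (P ^ (i : ℕ)) f)

def chainSpan (P : End K V) (n : ℕ) (e f : V) : Submodule K V :=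
  Submodule.span K (Set.range (chainPair P n e f))

variable {B : BilinForm K V} {P : End K V} {n : ℕ} {e f : V}

theorem chainPair_coef_inr_eq_zero (hP : IsAdjointPair B B P P) (hPn : P ^ n = 0)
    (he : ∀ i j : ℕ, B ((P ^ i) e) ((P ^ j) e) = 0) (hef : B ((P ^ (n - 1)) e) f ≠ 0)
    {coef : Fin n ⊕ Fin n → K}
    (h : ∀ j : Fin n, B ((P ^ (j : ℕ)) e) (∑ i, coef i • chainPair P n e f i) = 0) :
    ∀ i, coef (.inr i) = 0 := by
  have hc0 : ∀ k, n ≤ k → B ((P ^ k) e) f = 0 := fun k hk => by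
    simp [pow_eq_zero_of_le hk hPn]
  refine congrFun (eq_zero_of_hankel_sum_mul_eq_zero hef hc0 fun j => ?_)
  rw [← h j]
  simp [chainPair, Fintype.sum_sum_type, he, hP.apply_pow_apply_pow]

theorem chainPair_coef_eq_zero (hB : B.IsAlt) (hP : IsAdjointPair B B P P) (hPn : P ^ n = 0)
    (he : ∀ i j : ℕ, B ((P ^ i) e) ((P ^ j) e) = 0) (hef : B ((P ^ (n - 1)) e) f ≠ 0)
    {coef : Fin n ⊕ Fin n → K}
    (h : ∀ i, B (chainPair P n e f i) (∑ i, coef i • chainPair P n e f i) = 0) :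
    coef = 0 := by
  have hr := chainPair_coef_inr_eq_zero hP hPn he hef fun j => h (.inl j)
  have hc0 : ∀ k, n ≤ k → B ((P ^ k) e) f = 0 := fun k hk => by
    simp [pow_eq_zero_of_le hk hPn]
  have hl := eq_zero_of_hankel_sum_mul_eq_zero (b := fun i => coef (.inl i)) hef hc0 fun j => by
    have hfe : ∀ i : ℕ, B ((P ^ (j : ℕ)) f) ((P ^ i) e) = -B ((P ^ (j + i)) e) f := fun i => by
      rw [← hB.neg_eq, hP.apply_pow_apply_pow, add_comm]
    simpa [chainPair, Fintype.sum_sum_type, hr, hfe] using h (.inr j)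
  ext (i | i)
  exacts [congrFun hl i, hr i]

theorem linearIndependent_chainPair (hB : B.IsAlt) (hP : IsAdjointPair B B P P)
    (hPn : P ^ n = 0) (he : ∀ i j : ℕ, B ((P ^ i) e) ((P ^ j) e) = 0)
    (hef : B ((P ^ (n - 1)) e) f ≠ 0) : LinearIndependent K (chainPair P n e f) :=
  Fintype.linearIndependent_iff.2 fun _ hsum =>
    congrFun (chainPair_coef_eq_zero hB hP hPn he hef fun _ => by rw [hsum, map_zero])

theorem finrank_chainSpan (hB : B.IsAlt) (hP : IsAdjointPair B B P P) (hPn : P ^ n = 0)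
    (he : ∀ i j : ℕ, B ((P ^ i) e) ((P ^ j) e) = 0) (hef : B ((P ^ (n - 1)) e) f ≠ 0) :
    finrank K (chainSpan P n e f) = 2 * n := by
  rw [chainSpan, finrank_span_eq_card (linearIndependent_chainPair hB hP hPn he hef)]
  simp [two_mul]

theorem pow_apply_left_mem_chainSpan (hPn : P ^ n = 0) (k : ℕ) :
    (P ^ k) e ∈ chainSpan P n e f := by
  rcases lt_or_ge k n with hk | hk
  · exact Submodule.subset_span ⟨.inl ⟨k, hk⟩, rfl⟩
  · simp [pow_eq_zero_of_le hk hPn]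

theorem pow_apply_right_mem_chainSpan (hPn : P ^ n = 0) (k : ℕ) :
    (P ^ k) f ∈ chainSpan P n e f := by
  rcases lt_or_ge k n with hk | hk
  · exact Submodule.subset_span ⟨.inr ⟨k, hk⟩, rfl⟩
  · simp [pow_eq_zero_of_le hk hPn]

theorem chainSpan_mem_invtSubmodule (hPn : P ^ n = 0) : chainSpan P n e f ∈ P.invtSubmodule := by
  refine Submodule.span_le.2 ?_
  rintro _ ⟨i | i, rfl⟩
  · simpa [chainPair, ← Module.End.mul_apply, ← pow_succ'] using
      pow_apply_left_mem_chainSpan (f := f) hPn (i + 1)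
  · simpa [chainPair, ← Module.End.mul_apply, ← pow_succ'] using
      pow_apply_right_mem_chainSpan (e := e) hPn (i + 1)

theorem disjoint_chainSpan_orthogonal (hB : B.IsAlt) (hP : IsAdjointPair B B P P)
    (hPn : P ^ n = 0) (he : ∀ i j : ℕ, B ((P ^ i) e) ((P ^ j) e) = 0)
    (hef : B ((P ^ (n - 1)) e) f ≠ 0) :
    Disjoint (chainSpan P n e f) (B.orthogonal (chainSpan P n e f)) := by
  rw [Submodule.disjoint_def]
  intro v hv hvo
  obtain ⟨coef, rfl⟩ := (Submodule.mem_span_range_iff_exists_fun K).1 hv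
  have hcoef := chainPair_coef_eq_zero hB hP hPn he hef fun i =>
    hvo _ (Submodule.subset_span ⟨i, rfl⟩)
  simp [hcoef]

theorem isCompl_chainSpan_orthogonal [FiniteDimensional K V] (hB : B.IsAlt)
    (hP : IsAdjointPair B B P P) (hPn : P ^ n = 0)
    (he : ∀ i j : ℕ, B ((P ^ i) e) ((P ^ j) e) = 0) (hef : B ((P ^ (n - 1)) e) f ≠ 0) :
    IsCompl (chainSpan P n e f) (B.orthogonal (chainSpan P n e f)) :=
  (LinearMap.BilinForm.isCompl_orthogonal_iff_disjoint hB.isRefl).2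
    (disjoint_chainSpan_orthogonal hB hP hPn he hef)

theorem eq_zero_of_mem_chainSpan_of_mem_ker (hB : B.IsAlt) (hP : IsAdjointPair B B P P)
    (hPn : P ^ n = 0) (he : ∀ i j : ℕ, B ((P ^ i) e) ((P ^ j) e) = 0)
    (hef : B ((P ^ (n - 1)) e) f ≠ 0) {v : V} (hv : v ∈ chainSpan P n e f) (hPv : P v = 0)
    (hev : B e v = 0) (hfv : B f v = 0) : v = 0 := by
  have hpow : ∀ x, B x v = 0 → ∀ k, B ((P ^ k) x) v = 0 := by
    intro x hx k
    cases k with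
    | zero => simpa using hx
    | succ k => rw [pow_succ', Module.End.mul_apply, hP, hPv, map_zero]
  refine Submodule.disjoint_def.1 (disjoint_chainSpan_orthogonal hB hP hPn he hef) v hv ?_
  rw [chainSpan, LinearMap.BilinForm.mem_orthogonal_span_iff]
  rintro _ ⟨i | i, rfl⟩
  exacts [hpow e hev i, hpow f hfv i]

theorem finrank_chainSpan_inf_ker (hB : B.IsAlt) (hP : IsAdjointPair B B P P)
    (hPn : P ^ n = 0) (he : ∀ i j : ℕ, B ((P ^ i) e) ((P ^ j) e) = 0)
    (hef : B ((P ^ (n - 1)) e) f ≠ 0) :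
    finrank K ↥(chainSpan P n e f ⊓ LinearMap.ker P) = 2 := by
  have : FiniteDimensional K (chainSpan P n e f) :=
    FiniteDimensional.span_of_finite K (Set.finite_range _)
  apply le_antisymm
  · let ψ := ((B e).prod (B f)).domRestrict (chainSpan P n e f ⊓ LinearMap.ker P)
    have hψ : Function.Injective ψ := by
      rw [injective_iff_map_eq_zero]
      rintro ⟨v, hv, hPv⟩ h
      simp only [ψ, LinearMap.domRestrict_apply, LinearMap.prod_apply, Function.prod_apply,
        Prod.mk_eq_zero] at h
      exact Subtype.ext (eq_zero_of_mem_chainSpan_of_mem_ker hB hP hPn he hef hv hPv h.1 h.2)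
    simpa using LinearMap.finrank_le_finrank_of_injective hψ
  · have hli : LinearIndependent K ![(P ^ (n - 1)) e, (P ^ (n - 1)) f] := by
      rw [LinearIndependent.pair_iff]
      intro a b hab
      have hb : b = 0 := by
        have h0 : B e ((P ^ (n - 1)) e) = 0 := by simpa using he 0 (n - 1)
        simpa [h0, ← hP.pow_s13 (n - 1) e f, hef] using congrArg (B e) hab
      have hne : (P ^ (n - 1)) e ≠ 0 := fun h => hef (by rw [h, map_zero, LinearMap.zero_apply])
      rw [hb, zero_smul, add_zero] at hab
      exact ⟨(smul_eq_zero.1 hab).resolve_right hne, hb⟩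
    have hker : ∀ x, (P ^ (n - 1)) x ∈ LinearMap.ker P := fun x => by
      rw [LinearMap.mem_ker, ← Module.End.mul_apply, ← pow_succ',
        pow_eq_zero_of_le (by omega) hPn, LinearMap.zero_apply]
    calc 2 = finrank K (Submodule.span K (Set.range ![(P ^ (n - 1)) e, (P ^ (n - 1)) f])) := by
          simp [finrank_span_eq_card hli]
      _ ≤ _ := by
        refine Submodule.finrank_mono (Submodule.span_le.2 ?_)
        rintro _ ⟨i, rfl⟩
        fin_cases i
        exacts [⟨pow_apply_left_mem_chainSpan hPn _, hker e⟩,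
          ⟨pow_apply_right_mem_chainSpan hPn _, hker f⟩]

theorem mem_of_add_mem_of_mem_orthogonal_chainSpan (hP : IsAdjointPair B B P P)
    (hPn : P ^ n = 0) (hef : B ((P ^ (n - 1)) e) f ≠ 0) {L : Submodule K V}
    (hL : ∀ u ∈ L, ∀ v ∈ L, B u v = 0) (heL : ∀ k, (P ^ k) e ∈ L) {v₁ v₂ : V}
    (hv₁ : v₁ ∈ chainSpan P n e f) (hv₂ : v₂ ∈ B.orthogonal (chainSpan P n e f))
    (hl : v₁ + v₂ ∈ L) : v₁ ∈ L := by
  have he : ∀ i j, B ((P ^ i) e) ((P ^ j) e) = 0 := fun i j => hL _ (heL i) _ (heL j)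
  obtain ⟨coef, rfl⟩ := (Submodule.mem_span_range_iff_exists_fun K).1 hv₁
  have hr := chainPair_coef_inr_eq_zero hP hPn he hef fun j => by
    have h := hL _ (heL j) _ hl
    rwa [map_add, hv₂ _ (pow_apply_left_mem_chainSpan hPn j), add_zero] at h
  rw [Fintype.sum_sum_type]
  simpa [chainPair, hr] using L.sum_mem fun i _ => L.smul_mem (coef (.inl i)) (heL i)

end chainPair

theorem extract_one_jordan_block_general
    {V : Type*} [AddCommGroup V] [Module ℂ V] [FiniteDimensional ℂ V]
    (B : V →ₗ[ℂ] V →ₗ[ℂ] ℂ)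
    (hBalt : ∀ v, B v v = 0)
    (hBnd : ∀ v, (∀ u, B v u = 0) → v = 0)
    (P : V →ₗ[ℂ] V)
    (hPsa : ∀ u v, B (P u) v = B u (P v))
    (n : ℕ)
    (hPn : P ^ n = 0)
    (L : Submodule ℂ V)
    (hLiso : ∀ u ∈ L, ∀ v ∈ L, B u v = 0)
    (hLinv : ∀ u ∈ L, P u ∈ L)
    (hLht : ¬ L ≤ LinearMap.ker (P ^ (n - 1))) :
    ∃ V₁ V₂ : Submodule ℂ V,
      (∀ v ∈ V₁, P v ∈ V₁) ∧
      (∀ v ∈ V₂, P v ∈ V₂) ∧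
      IsCompl V₁ V₂ ∧
      (∀ v₁ ∈ V₁, ∀ v₂ ∈ V₂, B v₁ v₂ = 0) ∧
      finrank ℂ V₁ = 2 * n ∧
      finrank ℂ ↥(V₁ ⊓ LinearMap.ker P) = 2 ∧
      L = (L ⊓ V₁) ⊔ (L ⊓ V₂) ∧
      ¬ (L ⊓ V₁ ≤ LinearMap.ker (P ^ (n - 1))) := by
  obtain ⟨e, heL, heP⟩ := SetLike.not_le_iff_exists.1 hLht
  obtain ⟨f, hef⟩ : ∃ f, B ((P ^ (n - 1)) e) f ≠ 0 := by
    by_contra! h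
    exact heP (hBnd _ h)
  have hPeL : ∀ k, (P ^ k) e ∈ L := fun k => by
    rw [Module.End.pow_apply]
    exact Set.MapsTo.iterate hLinv k heL
  have he : ∀ i j, B ((P ^ i) e) ((P ^ j) e) = 0 := fun i j => hLiso _ (hPeL i) _ (hPeL j)
  have hcompl := isCompl_chainSpan_orthogonal hBalt hPsa hPn he hef
  refine ⟨chainSpan P n e f, BilinForm.orthogonal B (chainSpan P n e f),
    chainSpan_mem_invtSubmodule hPn,
    BilinForm.orthogonal_mem_invtSubmodule_s13 hPsa (chainSpan_mem_invtSubmodule hPn), hcompl,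
    fun v₁ h₁ v₂ h₂ => h₂ v₁ h₁, finrank_chainSpan hBalt hPsa hPn he hef,
    finrank_chainSpan_inf_ker hBalt hPsa hPn he hef,
    Submodule.eq_inf_sup_inf_of_isCompl hcompl fun v₁ h₁ v₂ h₂ =>
      mem_of_add_mem_of_mem_orthogonal_chainSpan hPsa hPn hef hLiso hPeL h₁ h₂,
    fun h => heP (h ⟨heL, by simpa using pow_apply_left_mem_chainSpan (f := f) hPn 0⟩)⟩

/-- **Extraction of one maximal Jordan block.**
Let `B` be a nondegenerate alternating form on a finite-dimensional complex vector
space `V` and `P` self-adjoint with respect to `B` and nilpotent of index `n`.  If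
`L` is a `P`-invariant Lagrangian subspace with `L ⊄ ker P^{n-1}`, then `V` splits
into a `B`-orthogonal direct sum of `P`-invariant subspaces `V₁ ⊕ V₂` with `V₁` a
single Jordan block `J_{0,2n}` (i.e. `dim V₁ = 2n` and `dim (V₁ ⊓ ker P) = 2`),
`L = (L ⊓ V₁) ⊕ (L ⊓ V₂)`, and `L ⊓ V₁ ⊄ ker P^{n-1}`. -/
theorem extract_one_jordan_block
    {V : Type*} [AddCommGroup V] [Module ℂ V] [FiniteDimensional ℂ V]
    (B : V →ₗ[ℂ] V →ₗ[ℂ] ℂ)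
    (hBalt : ∀ v, B v v = 0)
    (hBnd : ∀ v, (∀ u, B v u = 0) → v = 0)
    (P : V →ₗ[ℂ] V)
    (hPsa : ∀ u v, B (P u) v = B u (P v))
    (n : ℕ)
    (hPn : P ^ n = 0)
    (hPn1 : P ^ (n - 1) ≠ 0)
    (L : Submodule ℂ V)
    (hLiso : ∀ u ∈ L, ∀ v ∈ L, B u v = 0)
    (hLdim : 2 * finrank ℂ L = finrank ℂ V)
    (hLinv : ∀ u ∈ L, P u ∈ L)
    (hLht : ¬ L ≤ LinearMap.ker (P ^ (n - 1))) :
    ∃ V₁ V₂ : Submodule ℂ V,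
      (∀ v ∈ V₁, P v ∈ V₁) ∧
      (∀ v ∈ V₂, P v ∈ V₂) ∧
      IsCompl V₁ V₂ ∧
      (∀ v₁ ∈ V₁, ∀ v₂ ∈ V₂, B v₁ v₂ = 0) ∧
      finrank ℂ V₁ = 2 * n ∧
      finrank ℂ ↥(V₁ ⊓ LinearMap.ker P) = 2 ∧
      L = (L ⊓ V₁) ⊔ (L ⊓ V₂) ∧
      ¬ (L ⊓ V₁ ≤ LinearMap.ker (P ^ (n - 1))) :=
  extract_one_jordan_block_general B hBalt hBnd P hPsa n hPn L hLiso hLinv hLht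
end
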